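/- arXiv:math/0103184 — 7 statements merged into one kernel-verified Lean document; each statement's English description precedes it below -/
import Mathlib

section
/- Let c ∈ ℂ, r > 0, and let G ⊆ ℂ be an open set containing the closed disc {s : |s − c| ≤ r}. Let b ∈ ℂ, b ≠ 0, with b and −b in the open disc {s : |s − c| < r}, and let f₀ be holomorphic on G. Suppose functions fₙ, gₙ holomorphic on G and constants αₙ, βₙ satisfy the Bleistein scheme: αₙ = (fₙ(b) + fₙ(−b))/2, βₙ = (fₙ(b) − fₙ(−b))/(2b), fₙ(t) = αₙ + βₙ·t + (t² − b²)·gₙ(t) for all t ∈ G, and fₙ₊₁ = gₙ′, for n = 0, 1, 2, …. Define rational functions Rₙ(s, t) recursively by R₀(s, t) = 1/(s − t) and Rₙ₊₁(s, t) = (−1/(s² − b²))·(d/ds)Rₙ(s, t). Then for every n ≥ 0 and every t in the open disc with t ≠ b and t ≠ −b, fₙ(t) = (1/(2πi)) ∮_{|s−c|=r} Rₙ(s, t) f₀(s) ds, the contour traversed once counterclockwise. -/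
/-!
By induction on `n`, for all `m` at once, `∮ Rₙ(s, t) f_m(s) ds = 2πi f_{m+n}(t)`; `n = 0` is
Cauchy's integral formula. On the circle,
`R_{n+1} f_m = R_{n+1} (α_m + β_m s) - (∂ₛRₙ) g_m`.
The kernel `R_{n+1}(·, t)` is holomorphic off `{t, b, -b}` and, by Cauchy estimates at infinity,
decays like `s^{-(3n+4)}`; so the first term integrates to zero (push the circle to infinity).
Integrating the second term by parts gives `∮ Rₙ g_m' = ∮ Rₙ f_{m+1}`.
-/

open Complex Metric Filter Asymptotics Bornology
open scoped Topology

section Decay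

variable {E : Type*} [NormedAddCommGroup E] [NormedSpace ℂ E]

theorem isEquivalent_pow_sub_const_cobounded (a : ℂ) {k : ℕ} (hk : k ≠ 0) :
    (fun z : ℂ => z ^ k - a) ~[cobounded ℂ] fun z => z ^ k := by
  have hlim : Tendsto (fun z : ℂ => ‖z ^ k‖) (cobounded ℂ) atTop := by
    simpa only [Function.comp_def, norm_pow] using
      (tendsto_pow_atTop hk).comp tendsto_norm_cobounded_atTop
  exact ((isLittleO_const_left (c := a)).2 (Or.inr hlim)).neg_left.congr_left fun z => by simp

theorem isBigO_inv_pow_sub_const_cobounded (a : ℂ) {k : ℕ} (hk : k ≠ 0) :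
    (fun z : ℂ => (z ^ k - a)⁻¹) =O[cobounded ℂ] fun z => z⁻¹ ^ k := by
  simpa only [Pi.inv_def, inv_pow] using (isEquivalent_pow_sub_const_cobounded a hk).inv.isBigO

theorem isBigO_deriv_cobounded_inv_pow {F : ℂ → E} {k : ℕ}
    (hd : ∀ᶠ z in cobounded ℂ, DifferentiableAt ℂ F z)
    (hF : F =O[cobounded ℂ] fun z => z⁻¹ ^ k) :
    deriv F =O[cobounded ℂ] fun z => z⁻¹ ^ (k + 1) := by
  obtain ⟨C, hCpos, hC⟩ := hF.exists_pos
  obtain ⟨M, -, hM⟩ := hasBasis_cobounded_norm.eventually_iff.1 (hd.and hC.bound)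
  -- Cauchy's estimate on the disc of radius `‖z‖ / 2` about `z`, which stays far from the origin.
  refine .of_bound (C * 2 ^ (k + 1)) ?_
  filter_upwards [eventually_cobounded_le_norm (2 * M), eventually_ne_cobounded 0]
    with z hzM hz0
  have hρ : 0 < ‖z‖ / 2 := by positivity
  have hfar : ∀ w ∈ closedBall z (‖z‖ / 2), ‖z‖ / 2 ≤ ‖w‖ := fun w hw => by
    have := norm_sub_norm_le z w
    rw [mem_closedBall, dist_comm, dist_eq_norm] at hw
    linarith
  have hdiff : DiffContOnCl ℂ F (ball z (‖z‖ / 2)) :=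
    DifferentiableOn.diffContOnCl_ball (U := closedBall z (‖z‖ / 2)) (fun w hw =>
      (hM (x := w) (show M ≤ ‖w‖ by linarith [hfar w hw])).1.differentiableWithinAt) subset_rfl
  have hsphere : ∀ w ∈ sphere z (‖z‖ / 2), ‖F w‖ ≤ C * (‖z‖ / 2)⁻¹ ^ k := fun w hw => by
    have hw' := hfar w (sphere_subset_closedBall hw)
    calc ‖F w‖ ≤ C * ‖w⁻¹ ^ k‖ := (hM (x := w) (show M ≤ ‖w‖ by linarith)).2
      _ ≤ C * (‖z‖ / 2)⁻¹ ^ k := by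
        rw [norm_pow, norm_inv]
        gcongr
  calc ‖deriv F z‖ ≤ C * (‖z‖ / 2)⁻¹ ^ k / (‖z‖ / 2) :=
        norm_deriv_le_of_forall_mem_sphere_norm_le hρ hdiff hsphere
    _ = C * 2 ^ (k + 1) * ‖z⁻¹ ^ (k + 1)‖ := by
        have hz : ‖z‖ ≠ 0 := norm_ne_zero_iff.2 hz0
        rw [norm_pow, norm_inv, inv_div, div_pow, pow_succ, pow_succ, inv_pow]
        field_simp

theorem isBigO_inv_pow_inv_pow_cobounded_of_le {p q : ℕ} (hpq : p ≤ q) :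
    (fun z : ℂ => z⁻¹ ^ q) =O[cobounded ℂ] fun z => z⁻¹ ^ p := by
  simpa only [inv_pow] using (isBigO_pow_pow_cobounded_of_le hpq).inv_rev
    ((eventually_ne_cobounded 0).mono fun z hz h => absurd h (pow_ne_zero p hz))

theorem circleIntegral_eq_zero_of_isBigO_inv_pow {F : ℂ → E} {c : ℂ} {r : ℝ} (hr : 0 < r)
    (hd : ∀ z ∉ ball c r, DifferentiableAt ℂ F z)
    {k : ℕ} (hk : 2 ≤ k) (hF : F =O[cobounded ℂ] fun z => z⁻¹ ^ k) :
    (∮ z in C(c, r), F z) = 0 := by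
  have hconst : ∀ ρ ≥ r, (∮ z in C(c, ρ), F z) = ∮ z in C(c, r), F z := fun ρ hρ =>
    circleIntegral_eq_of_differentiable_on_annulus_off_countable hr hρ Set.countable_empty
      (fun z hz => (hd z hz.2).continuousAt.continuousWithinAt)
      (fun z hz => hd z fun h => hz.1.2 (ball_subset_closedBall h))
  obtain ⟨C, hCpos, hC⟩ := (hF.trans (isBigO_inv_pow_inv_pow_cobounded_of_le hk)).exists_pos
  obtain ⟨M, -, hM⟩ := hasBasis_cobounded_norm.eventually_iff.1 hC.bound
  have hbound : ∀ᶠ ρ in atTop, ‖∮ z in C(c, ρ), F z‖ ≤ 8 * Real.pi * C / ρ := by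
    filter_upwards [eventually_ge_atTop (M + ‖c‖), eventually_ge_atTop (2 * ‖c‖),
      eventually_gt_atTop 0] with ρ hρM hρc hρ
    have hsphere : ∀ z ∈ sphere c ρ, ‖F z‖ ≤ C * (ρ / 2)⁻¹ ^ 2 := fun z hz => by
      have hz' : ρ - ‖c‖ ≤ ‖z‖ := by
        have := norm_sub_le z c
        rw [mem_sphere, dist_eq_norm] at hz
        linarith
      calc ‖F z‖ ≤ C * ‖z⁻¹ ^ 2‖ := hM (show M ≤ ‖z‖ by linarith)
        _ ≤ C * (ρ / 2)⁻¹ ^ 2 := by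
          rw [norm_pow, norm_inv]
          gcongr
          linarith
    calc ‖∮ z in C(c, ρ), F z‖ ≤ 2 * Real.pi * ρ * (C * (ρ / 2)⁻¹ ^ 2) :=
          circleIntegral.norm_integral_le_of_norm_le_const hρ.le hsphere
      _ = 8 * Real.pi * C / ρ := by
          field_simp
          ring
  have hlim : Tendsto (fun ρ => ∮ z in C(c, ρ), F z) atTop (𝓝 0) :=
    squeeze_zero_norm' hbound (tendsto_const_nhds.div_atTop tendsto_id)
  exact tendsto_nhds_unique
    (tendsto_const_nhds.congr' ((eventually_ge_atTop r).mono fun ρ hρ => (hconst ρ hρ).symm))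
    hlim

end Decay

theorem circleIntegral_deriv_mul_eq_neg {c : ℂ} {r : ℝ} {U : Set ℂ} {u v : ℂ → ℂ} (hr : 0 ≤ r)
    (hU : IsOpen U) (hsub : sphere c r ⊆ U)
    (hu : DifferentiableOn ℂ u U) (hv : DifferentiableOn ℂ v U) :
    (∮ z in C(c, r), deriv u z * v z) = -∮ z in C(c, r), u z * deriv v z := by
  have hsum : (∮ z in C(c, r), deriv u z * v z + u z * deriv v z) = 0 :=
    circleIntegral.integral_eq_zero_of_hasDerivWithinAt hr fun z hz =>
      have hz := hU.mem_nhds (hsub hz)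
      ((hu.differentiableAt hz).hasDerivAt.mul
        (hv.differentiableAt hz).hasDerivAt).hasDerivWithinAt
  rw [circleIntegral.integral_add (f := fun z => deriv u z * v z)
    (g := fun z => u z * deriv v z)
    ((((hu.deriv hU).continuousOn.mul hv.continuousOn).mono hsub).circleIntegrable hr)
    (((hu.continuousOn.mul (hv.deriv hU).continuousOn).mono hsub).circleIntegrable hr)] at hsum
  exact eq_neg_of_add_eq_zero_left hsum

theorem sq_sub_sq_ne_zero_of_notMem {t b s : ℂ} (hs : s ∉ ({t, b, -b} : Set ℂ)) :
    s ^ 2 - b ^ 2 ≠ 0 := by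
  simp only [Set.mem_insert_iff, Set.mem_singleton_iff, not_or] at hs
  exact sub_ne_zero.2 fun h => (sq_eq_sq_iff_eq_or_eq_neg.1 h).elim hs.2.1 hs.2.2

/-- `bleisteinKernel b t n` is the kernel `Rₙ(·, t)`. -/
noncomputable def bleisteinKernel (b t : ℂ) : ℕ → ℂ → ℂ
  | 0 => fun s => (s - t)⁻¹
  | n + 1 => fun s => -(s ^ 2 - b ^ 2)⁻¹ * deriv (bleisteinKernel b t n) s

namespace bleisteinKernel

variable {b t : ℂ}

theorem analyticOnNhd (n : ℕ) : AnalyticOnNhd ℂ (bleisteinKernel b t n) {t, b, -b}ᶜ := by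
  have hopen : IsOpen ({t, b, -b} : Set ℂ)ᶜ := (Set.toFinite _).isClosed.isOpen_compl
  induction n with
  | zero =>
    refine DifferentiableOn.analyticOnNhd ?_ hopen
    exact (differentiableOn_id.sub_const t).inv fun s hs => sub_ne_zero.2 fun h => hs (.inl h)
  | succ n ih =>
    refine AnalyticOnNhd.mul (DifferentiableOn.analyticOnNhd ?_ hopen) ih.deriv
    exact (((differentiableOn_id.pow 2).sub_const _).inv
      fun s hs => sq_sub_sq_ne_zero_of_notMem hs).neg

theorem eventually_differentiableAt (n : ℕ) :
    ∀ᶠ s in cobounded ℂ, DifferentiableAt ℂ (bleisteinKernel b t n) s :=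
  Filter.mem_of_superset (Set.toFinite {t, b, -b}).isBounded
    fun s hs => (analyticOnNhd n s hs).differentiableAt

theorem isBigO (n : ℕ) :
    bleisteinKernel b t n =O[cobounded ℂ] fun s => s⁻¹ ^ (3 * n + 1) := by
  induction n with
  | zero => simpa [bleisteinKernel] using isBigO_inv_pow_sub_const_cobounded t one_ne_zero
  | succ n ih =>
    refine ((isBigO_inv_pow_sub_const_cobounded (b ^ 2) two_ne_zero).neg_left.mul
      (isBigO_deriv_cobounded_inv_pow (eventually_differentiableAt n) ih)).congr_right
      fun s => by ring

variable {c : ℂ} {r : ℝ}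

theorem circleIntegral_succ_mul_linear_eq_zero (hr : 0 < r) (hsing : {t, b, -b} ⊆ ball c r)
    (n : ℕ) (p q : ℂ) : (∮ s in C(c, r), bleisteinKernel b t (n + 1) s * (p + q * s)) = 0 := by
  have hlin : (fun s : ℂ => p + q * s) =O[cobounded ℂ] fun s => s :=
    (isLittleO_const_left.2 (Or.inr tendsto_norm_cobounded_atTop)).isBigO.add
      ((isBigO_refl _ _).const_mul_left q)
  refine circleIntegral_eq_zero_of_isBigO_inv_pow hr (fun s hs => ?_) (k := 3 * n + 3)
    (by omega) ?_
  · exact (analyticOnNhd (n + 1) s fun h => hs (hsing h)).differentiableAt.mul (by fun_prop)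
  · refine ((isBigO (n + 1)).mul hlin).trans_eventuallyEq
      ((eventually_ne_cobounded 0).mono fun s hs => ?_)
    dsimp only
    rw [pow_succ, mul_assoc, inv_mul_cancel₀ hs, mul_one]
    ring

theorem circleIntegral_succ_mul_eq (hr : 0 < r) (hsing : {t, b, -b} ⊆ ball c r)
    {U : Set ℂ} (hU : IsOpen U) (hsub : sphere c r ⊆ U) {φ g : ℂ → ℂ} {p q : ℂ}
    (hg : DifferentiableOn ℂ g U) (hφ : ∀ s ∈ U, φ s = p + q * s + (s ^ 2 - b ^ 2) * g s)
    (n : ℕ) :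
    (∮ s in C(c, r), bleisteinKernel b t (n + 1) s * φ s) =
      ∮ s in C(c, r), bleisteinKernel b t n s * deriv g s := by
  set V := U ∩ ({t, b, -b} : Set ℂ)ᶜ
  have hV : IsOpen V := hU.inter (Set.toFinite _).isClosed.isOpen_compl
  have hsphere : sphere c r ⊆ V :=
    Set.subset_inter hsub ((sphere_disjoint_ball.mono_right hsing).subset_compl_right)
  have hK : DifferentiableOn ℂ (bleisteinKernel b t n) V :=
    (analyticOnNhd n).differentiableOn.mono Set.inter_subset_right
  have hsplit : Set.EqOn (fun s => bleisteinKernel b t (n + 1) s * φ s)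
      (fun s => bleisteinKernel b t (n + 1) s * (p + q * s) -
        deriv (bleisteinKernel b t n) s * g s) (sphere c r) := fun s hs => by
    have hb := sq_sub_sq_ne_zero_of_notMem (hsphere hs).2
    simp only [hφ s (hsub hs), bleisteinKernel]
    field_simp
    ring
  have hint₁ : CircleIntegrable (fun s => bleisteinKernel b t (n + 1) s * (p + q * s)) c r :=
    (((analyticOnNhd (n + 1)).continuousOn.mono (hsphere.trans Set.inter_subset_right)).mul
      (by fun_prop)).circleIntegrable hr.le
  have hint₂ : CircleIntegrable (fun s => deriv (bleisteinKernel b t n) s * g s) c r :=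
    (((hK.deriv hV).continuousOn.mul (hg.continuousOn.mono Set.inter_subset_left)).mono
      hsphere).circleIntegrable hr.le
  rw [circleIntegral.integral_congr hr.le hsplit, circleIntegral.integral_sub hint₁ hint₂,
    circleIntegral_succ_mul_linear_eq_zero hr hsing, zero_sub,
    circleIntegral_deriv_mul_eq_neg hr.le hV hsphere hK (hg.mono Set.inter_subset_left), neg_neg]

theorem circleIntegral_mul_eq (hr : 0 < r) (hsing : {t, b, -b} ⊆ ball c r) {G : Set ℂ}
    (hG : IsOpen G) (hGsub : closedBall c r ⊆ G) {f g : ℕ → ℂ → ℂ} {α β : ℕ → ℂ}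
    (hf : ∀ m, DifferentiableOn ℂ (f m) G) (hg : ∀ m, DifferentiableOn ℂ (g m) G)
    (hdecomp : ∀ m, ∀ s ∈ G, f m s = α m + β m * s + (s ^ 2 - b ^ 2) * g m s)
    (hstep : ∀ m, ∀ s ∈ G, f (m + 1) s = deriv (g m) s) (n m : ℕ) :
    (∮ s in C(c, r), bleisteinKernel b t n s * f m s) =
      2 * (Real.pi : ℂ) * I * f (m + n) t := by
  induction n generalizing m with
  | zero =>
    simpa [bleisteinKernel] using
      ((hf m).mono hGsub).circleIntegral_sub_inv_smul (hsing (.inl rfl))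
  | succ n ih =>
    have hsphere := sphere_subset_closedBall.trans hGsub
    rw [circleIntegral_succ_mul_eq hr hsing hG hsphere (hg m) (hdecomp m),
      show m + (n + 1) = m + 1 + n by omega, ← ih,
      circleIntegral.integral_congr hr.le fun s hs => ?_]
    simp only [hstep m s (hsphere hs)]

end bleisteinKernel

theorem bleistein_fn_cauchy_repr_general
    (c : ℂ) (r : ℝ) (hr : 0 < r) (G : Set ℂ) (hG : IsOpen G)
    (hGsub : closedBall c r ⊆ G)
    (b : ℂ) (hbmem : b ∈ ball c r) (hbmem' : -b ∈ ball c r)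
    (f g : ℕ → ℂ → ℂ) (α β : ℕ → ℂ)
    (hf : ∀ n, DifferentiableOn ℂ (f n) G)
    (hg : ∀ n, DifferentiableOn ℂ (g n) G)
    (hdecomp : ∀ n, ∀ t ∈ G, f n t = α n + β n * t + (t ^ 2 - b ^ 2) * g n t)
    (hstep : ∀ n, ∀ t ∈ G, f (n + 1) t = deriv (g n) t)
    (R : ℕ → ℂ → ℂ → ℂ)
    (hR0 : ∀ s t : ℂ, R 0 s t = (s - t)⁻¹)
    (hRsucc : ∀ n, ∀ s t : ℂ,
      R (n + 1) s t = (-(s ^ 2 - b ^ 2)⁻¹) * deriv (fun x => R n x t) s) :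
    ∀ n : ℕ, ∀ t ∈ ball c r, t ≠ b → t ≠ -b →
      f n t = (2 * (Real.pi : ℂ) * Complex.I)⁻¹ *
        (∮ s in C(c, r), R n s t * f 0 s) := by
  intro n t ht _ _
  have hR : ∀ n, (fun s => R n s t) = bleisteinKernel b t n := by
    intro n
    induction n with
    | zero => exact funext fun s => hR0 s t
    | succ n ih => exact funext fun s => by rw [hRsucc, ih]; rfl
  have hsing : {t, b, -b} ⊆ ball c r := by
    simp [Set.insert_subset_iff, ht, hbmem, hbmem']
  have hrepr := bleisteinKernel.circleIntegral_mul_eq hr hsing hG hGsub hf hg hdecomp hstep n 0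
  simp only [← hR n, zero_add] at hrepr
  rw [hrepr, inv_mul_cancel_left₀ two_pi_I_ne_zero]

/-- Cauchy-type integral representation `fₙ(t) = (1/(2πi)) ∮ Rₙ(s,t) f₀(s) ds` for the
functions `fₙ` of the Bleistein scheme, where the rational kernels satisfy
`R₀(s,t) = 1/(s−t)` and `Rₙ₊₁(s,t) = (−1/(s²−b²))·(d/ds)Rₙ(s,t)`. -/
theorem bleistein_fn_cauchy_repr
    (c : ℂ) (r : ℝ) (hr : 0 < r) (G : Set ℂ) (hG : IsOpen G)
    (hGsub : closedBall c r ⊆ G)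
    (b : ℂ) (hb : b ≠ 0) (hbmem : b ∈ ball c r) (hbmem' : -b ∈ ball c r)
    (f g : ℕ → ℂ → ℂ) (α β : ℕ → ℂ)
    (hf : ∀ n, DifferentiableOn ℂ (f n) G)
    (hg : ∀ n, DifferentiableOn ℂ (g n) G)
    (hα : ∀ n, α n = (f n b + f n (-b)) / 2)
    (hβ : ∀ n, β n = (f n b - f n (-b)) / (2 * b))
    (hdecomp : ∀ n, ∀ t ∈ G, f n t = α n + β n * t + (t ^ 2 - b ^ 2) * g n t)
    (hstep : ∀ n, ∀ t ∈ G, f (n + 1) t = deriv (g n) t)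
    (R : ℕ → ℂ → ℂ → ℂ)
    (hR0 : ∀ s t : ℂ, R 0 s t = (s - t)⁻¹)
    (hRsucc : ∀ n, ∀ s t : ℂ,
      R (n + 1) s t = (-(s ^ 2 - b ^ 2)⁻¹) * deriv (fun x => R n x t) s) :
    ∀ n : ℕ, ∀ t ∈ ball c r, t ≠ b → t ≠ -b →
      f n t = (2 * (Real.pi : ℂ) * Complex.I)⁻¹ *
        (∮ s in C(c, r), R n s t * f 0 s) :=
  bleistein_fn_cauchy_repr_general c r hr G hG hGsub b hbmem hbmem' f g α β hf hg hdecomp hstep R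
    hR0 hRsucc
end

section
/- Let c ∈ ℂ, r > 0, and let G ⊆ ℂ be an open set containing the closed disc {s : |s − c| ≤ r}. Let b ∈ ℂ, b ≠ 0, with b and −b in the open disc {s : |s − c| < r}, and let f₀ be holomorphic on G. Suppose functions fₙ, gₙ holomorphic on G and constants αₙ, βₙ satisfy the Bleistein scheme: αₙ = (fₙ(b) + fₙ(−b))/2, βₙ = (fₙ(b) − fₙ(−b))/(2b), fₙ(t) = αₙ + βₙ·t + (t² − b²)·gₙ(t) for all t ∈ G, and fₙ₊₁ = gₙ′, for n = 0, 1, 2, …. Define functions Aₙ(s) and Bₙ(s) recursively by A₀(s) = s/(s² − b²), B₀(s) = 1/(s² − b²), Aₙ₊₁(s) = (−1/(s² − b²))·Aₙ′(s), Bₙ₊₁(s) = (−1/(s² − b²))·Bₙ′(s). Then for every n ≥ 0, αₙ = (1/(2πi)) ∮_{|s−c|=r} Aₙ(s) f₀(s) ds and βₙ = (1/(2πi)) ∮_{|s−c|=r} Bₙ(s) f₀(s) ds, the contour traversed once counterclockwise. -/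
/-!
Write `Kₙ` for either kernel. Since `(s² - b²) Kₙ₊₁ = -Kₙ'`, substituting
`f₀ = α₀ + β₀ s + (s² - b²) g₀` and integrating by parts on the circle gives
`∮ Kₙ₊₁ f₀ = ∮ Kₙ₊₁ (α₀ + β₀ s) + ∮ Kₙ g₀' = ∮ Kₙ f₁`. The first integral vanishes: by the quotient
rule `Kₙ₊₁ = Pₙ₊₁ / (s² - b²)^(2n+3)` with `deg Pₙ₊₁ ≤ 2n + 3`, so the integrand is holomorphic
outside the disc and decays faster than `1/s`, and the circle can be pushed to infinity.
Iterating along the shifted scheme, `∮ Kₙ f₀ = ∮ K₀ fₙ`, and the partial fractions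
`s / (s² - b²) = ((s - b)⁻¹ + (s + b)⁻¹) / 2`, `1 / (s² - b²) = ((s - b)⁻¹ - (s + b)⁻¹) / (2b)`
turn Cauchy's formula at `±b` into `2πi αₙ` and `2πi βₙ`.
-/

open Complex Metric

open Filter Topology Bornology Polynomial

theorem circleIntegral_mul_deriv_eq_neg {c : ℂ} {R : ℝ} (hR : 0 ≤ R) {u v u' v' : ℂ → ℂ}
    (hu : ∀ z ∈ sphere c R, HasDerivAt u (u' z) z) (hv : ∀ z ∈ sphere c R, HasDerivAt v (v' z) z)
    (hu' : ContinuousOn u' (sphere c R)) (hv' : ContinuousOn v' (sphere c R)) :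
    (∮ z in C(c, R), u z * v' z) = -∮ z in C(c, R), u' z * v z := by
  have hu_cont : ContinuousOn u (sphere c R) := fun z hz =>
    (hu z hz).continuousAt.continuousWithinAt
  have hv_cont : ContinuousOn v (sphere c R) := fun z hz =>
    (hv z hz).continuousAt.continuousWithinAt
  have hsum : (∮ z in C(c, R), (u' z * v z + u z * v' z)) = 0 :=
    circleIntegral.integral_eq_zero_of_hasDerivWithinAt hR fun z hz =>
      ((hu z hz).mul (hv z hz)).hasDerivWithinAt
  rw [circleIntegral.integral_add ((hu'.fun_mul hv_cont).circleIntegrable hR)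
    ((hu_cont.fun_mul hv').circleIntegrable hR)] at hsum
  linear_combination hsum

theorem circleIntegral_eq_zero_of_tendsto_cobounded {E : Type*} [NormedAddCommGroup E]
    [NormedSpace ℂ E] [CompleteSpace E] {c : ℂ} {r : ℝ} (hr : 0 < r) {F : ℂ → E}
    (hF : DifferentiableOn ℂ F (ball c r)ᶜ)
    (hlim : Tendsto (fun z => (z - c) • F z) (cobounded ℂ) (𝓝 0)) :
    (∮ z in C(c, r), F z) = 0 := by
  refine norm_le_zero_iff.mp (le_of_forall_gt_imp_ge_of_dense fun ε hε => ?_)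
  obtain ⟨R₀, -, hR₀⟩ := (hasBasis_cobounded_compl_closedBall c).eventually_iff.mp
    (hlim.norm.eventually (ge_mem_nhds (a := ε / (2 * Real.pi)) (by rw [norm_zero]; positivity)))
  set R := max r (R₀ + 1)
  have hrR : r ≤ R := le_max_left _ _
  have hR : 0 < R := hr.trans_le hrR
  have hannulus : (∮ z in C(c, R), F z) = ∮ z in C(c, r), F z := by
    refine circleIntegral_eq_of_differentiable_on_annulus_off_countable hr hrR
      Set.countable_empty (hF.continuousOn.mono fun z hz => hz.2) fun z hz => hF.differentiableAt ?_
    exact Filter.mem_of_superset (isClosed_closedBall.isOpen_compl.mem_nhds hz.1.2)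
      (Set.compl_subset_compl.mpr ball_subset_closedBall)
  have hbound : ∀ z ∈ sphere c R, ‖F z‖ ≤ ε / (2 * Real.pi) / R := by
    intro z hz
    have hzR : ‖z - c‖ = R := by simpa [dist_eq_norm] using hz
    have := hR₀ (x := z) (by
      rw [Set.mem_compl_iff, mem_closedBall, dist_eq_norm, hzR, not_le]
      exact (lt_add_one R₀).trans_le (le_max_right _ _))
    rw [le_div_iff₀ hR, mul_comm, ← hzR, ← norm_smul]
    exact this
  calc ‖∮ z in C(c, r), F z‖ = ‖∮ z in C(c, R), F z‖ := by rw [hannulus]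
    _ ≤ 2 * Real.pi * R * (ε / (2 * Real.pi) / R) :=
        circleIntegral.norm_integral_le_of_norm_le_const hR.le hbound
    _ = ε := by field_simp

theorem circleIntegral_eval_div_eval_eq_zero {c : ℂ} {r : ℝ} (hr : 0 < r) {P Q : ℂ[X]}
    (hQ : ∀ z ∉ ball c r, Q.eval z ≠ 0) (hdeg : P.natDegree + 1 < Q.natDegree) :
    (∮ z in C(c, r), P.eval z / Q.eval z) = 0 := by
  refine circleIntegral_eq_zero_of_tendsto_cobounded hr
    (fun z hz => (P.differentiableAt.div Q.differentiableAt (hQ z hz)).differentiableWithinAt) ?_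
  have hdeg' : ((X - C c) * P).degree < Q.degree := by
    refine degree_lt_degree ((natDegree_mul_le).trans_lt ?_)
    rw [natDegree_X_sub_C]
    omega
  refine ((isLittleO_cobounded_of_degree_lt hdeg').tendsto_div_nhds_zero).congr fun z => ?_
  simp [mul_div_assoc]

theorem circleIntegral_div_sub_mul_sub {c w₁ w₂ : ℂ} {r : ℝ} {f : ℂ → ℂ}
    (hf : DifferentiableOn ℂ f (closedBall c r)) (h₁ : w₁ ∈ ball c r) (h₂ : w₂ ∈ ball c r)
    (hne : w₁ ≠ w₂) :
    (∮ z in C(c, r), f z / ((z - w₁) * (z - w₂))) =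
      2 * Real.pi * I * ((f w₁ - f w₂) / (w₁ - w₂)) := by
  have hr : 0 ≤ r := (pos_of_mem_ball h₁).le
  have hsub : ∀ z ∈ sphere c r, ∀ w ∈ ball c r, z - w ≠ 0 := fun z hz w hw =>
    sub_ne_zero.mpr (sphere_disjoint_ball.ne_of_mem hz hw)
  have hcauchy : ∀ w ∈ ball c r, (∮ z in C(c, r), (z - w)⁻¹ * f z) = 2 * Real.pi * I * f w :=
    fun w hw => by simpa using hf.circleIntegral_sub_inv_smul hw
  have hint : ∀ w ∈ ball c r, CircleIntegrable (fun z => (z - w)⁻¹ * f z) c r := fun w hw =>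
    (((continuousOn_id.sub continuousOn_const).inv₀ fun z hz => hsub z hz w hw).mul
      (hf.continuousOn.mono sphere_subset_closedBall)).circleIntegrable hr
  calc (∮ z in C(c, r), f z / ((z - w₁) * (z - w₂)))
      = ∮ z in C(c, r), (w₁ - w₂)⁻¹ * ((z - w₁)⁻¹ * f z - (z - w₂)⁻¹ * f z) := by
        refine circleIntegral.integral_congr hr fun z hz => ?_
        have := hsub z hz w₁ h₁
        have := hsub z hz w₂ h₂
        have := sub_ne_zero.mpr hne
        field_simp
        ring
    _ = 2 * Real.pi * I * ((f w₁ - f w₂) / (w₁ - w₂)) := by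
        rw [circleIntegral.integral_const_mul,
          circleIntegral.integral_sub (hint w₁ h₁) (hint w₂ h₂), hcauchy w₁ h₁, hcauchy w₂ h₂]
        ring

theorem circleIntegral_div_sq_sub_sq_mul {c b : ℂ} {r : ℝ} {f : ℂ → ℂ}
    (hf : DifferentiableOn ℂ f (closedBall c r)) (hb : b ≠ 0) (h₁ : b ∈ ball c r)
    (h₂ : -b ∈ ball c r) :
    (∮ z in C(c, r), z / (z ^ 2 - b ^ 2) * f z) = 2 * Real.pi * I * ((f b + f (-b)) / 2) := by
  have hsum := circleIntegral_div_sub_mul_sub (f := fun z => z * f z)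
    (differentiableOn_id.fun_mul hf) h₁ h₂
    (fun h => hb (by linear_combination h / 2))
  convert hsum using 2
  · ext z; ring
  · field_simp; ring

theorem circleIntegral_one_div_sq_sub_sq_mul {c b : ℂ} {r : ℝ} {f : ℂ → ℂ}
    (hf : DifferentiableOn ℂ f (closedBall c r)) (hb : b ≠ 0) (h₁ : b ∈ ball c r)
    (h₂ : -b ∈ ball c r) :
    (∮ z in C(c, r), 1 / (z ^ 2 - b ^ 2) * f z) =
      2 * Real.pi * I * ((f b - f (-b)) / (2 * b)) := by
  have hsum := circleIntegral_div_sub_mul_sub hf h₁ h₂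
    (fun h => hb (by linear_combination h / 2))
  convert hsum using 2
  · ext z; ring
  · ring

theorem sq_sub_sq_ne_zero_of_notMem_s1 {R : Type*} [CommRing R] [NoZeroDivisors R] {s : Set R}
    {b z : R} (hb : b ∈ s) (hb' : -b ∈ s) (hz : z ∉ s) : z ^ 2 - b ^ 2 ≠ 0 :=
  sub_ne_zero.mpr fun h => (sq_eq_sq_iff_eq_or_eq_neg.mp h).elim
    (fun h => hz (h ▸ hb)) (fun h => hz (h ▸ hb'))

theorem hasDerivAt_eval_div_sq_sub_sq_pow (P : ℂ[X]) (k : ℕ) {b s : ℂ} (hs : s ^ 2 - b ^ 2 ≠ 0) :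
    HasDerivAt (fun z => P.eval z / (z ^ 2 - b ^ 2) ^ (k + 1))
      ((P.derivative.eval s * (s ^ 2 - b ^ 2) - 2 * (k + 1) * s * P.eval s) /
        (s ^ 2 - b ^ 2) ^ (k + 2)) s := by
  have hden : HasDerivAt (fun z => (z ^ 2 - b ^ 2) ^ (k + 1))
      (((k : ℂ) + 1) * (s ^ 2 - b ^ 2) ^ k * (2 * s)) s := by
    simpa using ((hasDerivAt_pow 2 s).sub_const (b ^ 2)).fun_pow (k + 1)
  refine ((P.hasDerivAt s).fun_div hden (pow_ne_zero _ hs)).congr_deriv ?_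
  rw [div_eq_div_iff (pow_ne_zero _ (pow_ne_zero _ hs)) (pow_ne_zero _ hs)]
  ring

/-- With `Kₙ(s) = Pₙ(s) / (s² - b²)^(2n+1)`, the quotient rule turns `Kₙ₊₁ = -(s² - b²)⁻¹ Kₙ'`
into this recursion for the numerators `Pₙ`. -/
noncomputable def kernelNumerator (b : ℂ) (p : ℂ[X]) : ℕ → ℂ[X]
  | 0 => p
  | n + 1 => C (4 * n + 2 : ℂ) * X * kernelNumerator b p n -
      (X ^ 2 - C (b ^ 2)) * derivative (kernelNumerator b p n)

theorem natDegree_kernelNumerator_le (b : ℂ) (p : ℂ[X]) (n : ℕ) :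
    (kernelNumerator b p n).natDegree ≤ p.natDegree + 2 * n := by
  induction n with
  | zero => simp [kernelNumerator]
  | succ n ih =>
    have h₁ : (C (4 * n + 2 : ℂ) * X).natDegree ≤ 1 :=
      (natDegree_C_mul_le _ _).trans natDegree_X_le
    have h₂ : (X ^ 2 - C (b ^ 2) : ℂ[X]).natDegree ≤ 2 := by
      rw [natDegree_X_pow_sub_C]
    have h₃ := natDegree_derivative_le (kernelNumerator b p n)
    refine (natDegree_sub_le_of_le (natDegree_mul_le_of_le h₁ ih)
      (natDegree_mul_le_of_le h₂ h₃)).trans ?_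
    omega

/-- The kernels `Aₙ` and `Bₙ` of the scheme are the cases `p = X` and `p = 1`. -/
def IsBleisteinKernel (b : ℂ) (p : ℂ[X]) (K : ℕ → ℂ → ℂ) : Prop :=
  (∀ s, K 0 s = p.eval s / (s ^ 2 - b ^ 2)) ∧
    ∀ n s, K (n + 1) s = -(s ^ 2 - b ^ 2)⁻¹ * deriv (K n) s

namespace IsBleisteinKernel

variable {b : ℂ} {p : ℂ[X]} {K : ℕ → ℂ → ℂ}

theorem eq_eval_div (hK : IsBleisteinKernel b p K) (n : ℕ) (s : ℂ) :
    K n s = (kernelNumerator b p n).eval s / (s ^ 2 - b ^ 2) ^ (2 * n + 1) := by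
  induction n generalizing s with
  | zero => simpa [kernelNumerator] using hK.1 s
  | succ n ih =>
    rw [hK.2 n s, funext ih]
    by_cases hs : s ^ 2 - b ^ 2 = 0
    · simp [hs]
    · rw [(hasDerivAt_eval_div_sq_sub_sq_pow _ (2 * n) hs).deriv, kernelNumerator]
      simp only [eval_sub, eval_mul, eval_pow, eval_C, eval_X]
      field_simp
      push_cast
      ring

theorem differentiableAt (hK : IsBleisteinKernel b p K) (n : ℕ) {s : ℂ}
    (hs : s ^ 2 - b ^ 2 ≠ 0) : DifferentiableAt ℂ (K n) s := by
  rw [funext (hK.eq_eval_div n)]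
  exact (hasDerivAt_eval_div_sq_sub_sq_pow _ (2 * n) hs).differentiableAt

theorem deriv_eq (hK : IsBleisteinKernel b p K) (n : ℕ) {s : ℂ} (hs : s ^ 2 - b ^ 2 ≠ 0) :
    deriv (K n) s = -((s ^ 2 - b ^ 2) * K (n + 1) s) := by
  rw [hK.2 n s]
  field_simp

variable {c : ℂ} {r : ℝ}

theorem circleIntegral_succ_mul_affine_eq_zero (hK : IsBleisteinKernel b p K)
    (hp : p.natDegree ≤ 1) (hr : 0 < r) (hb : b ∈ ball c r) (hb' : -b ∈ ball c r)
    (α β : ℂ) (n : ℕ) : (∮ z in C(c, r), K (n + 1) z * (α + β * z)) = 0 := by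
  have hQ : ∀ z, ((X ^ 2 - C (b ^ 2)) ^ (2 * (n + 1) + 1)).eval z =
      (z ^ 2 - b ^ 2) ^ (2 * (n + 1) + 1) := by simp
  have hdeg : ((C α + C β * X) * kernelNumerator b p (n + 1)).natDegree + 1 <
      ((X ^ 2 - C (b ^ 2)) ^ (2 * (n + 1) + 1)).natDegree := by
    rw [natDegree_pow, natDegree_X_pow_sub_C]
    have h₁ : (C α + C β * X).natDegree ≤ 1 := by compute_degree
    have h₂ := natDegree_kernelNumerator_le b p (n + 1)
    have := natDegree_mul_le (p := C α + C β * X) (q := kernelNumerator b p (n + 1))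
    omega
  rw [← circleIntegral_eval_div_eval_eq_zero hr (fun z hz => by
    rw [hQ]; exact pow_ne_zero _ (sq_sub_sq_ne_zero_of_notMem_s1 hb hb' hz)) hdeg]
  congr 1 with z
  rw [hK.eq_eval_div, hQ]
  simp only [eval_mul, eval_add, eval_C, eval_X]
  ring

theorem circleIntegral_succ_mul_eq (hK : IsBleisteinKernel b p K) (hp : p.natDegree ≤ 1)
    (hr : 0 < r) (hb : b ∈ ball c r) (hb' : -b ∈ ball c r) {G : Set ℂ} (hG : IsOpen G)
    (hsph : sphere c r ⊆ G) {f g : ℂ → ℂ} {α β : ℂ} (hg : DifferentiableOn ℂ g G)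
    (hdecomp : ∀ t ∈ G, f t = α + β * t + (t ^ 2 - b ^ 2) * g t) (n : ℕ) :
    (∮ z in C(c, r), K (n + 1) z * f z) = ∮ z in C(c, r), K n z * deriv g z := by
  have hQ : ∀ z ∈ sphere c r, z ^ 2 - b ^ 2 ≠ 0 := fun z hz =>
    sq_sub_sq_ne_zero_of_notMem_s1 hb hb' (sphere_disjoint_ball.notMem_of_mem_left hz)
  have hK_cont (m : ℕ) : ContinuousOn (K m) (sphere c r) := fun z hz =>
    (hK.differentiableAt m (hQ z hz)).continuousAt.continuousWithinAt
  have hK_deriv_cont : ContinuousOn (deriv (K n)) (sphere c r) :=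
    (((continuousOn_id.pow 2).sub continuousOn_const).mul (hK_cont (n + 1))).neg.congr
      fun z hz => hK.deriv_eq n (hQ z hz)
  have hg_deriv_cont : ContinuousOn (deriv g) (sphere c r) :=
    ((hg.analyticOnNhd hG).deriv.continuousOn).mono hsph
  have hg_cont : ContinuousOn g (sphere c r) := hg.continuousOn.mono hsph
  have haffine_int : CircleIntegrable (fun z => K (n + 1) z * (α + β * z)) c r :=
    ((hK_cont (n + 1)).mul (continuousOn_const.add (continuousOn_const.mul continuousOn_id))
      ).circleIntegrable hr.le
  calc (∮ z in C(c, r), K (n + 1) z * f z)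
      = ∮ z in C(c, r), (K (n + 1) z * (α + β * z) - deriv (K n) z * g z) := by
        refine circleIntegral.integral_congr hr.le fun z hz => ?_
        simp only [hdecomp z (hsph hz), hK.deriv_eq n (hQ z hz)]
        ring
    _ = ∮ z in C(c, r), K n z * deriv g z := by
        rw [circleIntegral.integral_sub haffine_int
            ((hK_deriv_cont.fun_mul hg_cont).circleIntegrable hr.le),
          hK.circleIntegral_succ_mul_affine_eq_zero hp hr hb hb', zero_sub,
          circleIntegral_mul_deriv_eq_neg hr.le
            (fun z hz => (hK.differentiableAt n (hQ z hz)).hasDerivAt)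
            (fun z hz => (hg.differentiableAt (hG.mem_nhds (hsph hz))).hasDerivAt)
            hK_deriv_cont hg_deriv_cont]

theorem circleIntegral_mul_eq (hK : IsBleisteinKernel b p K) (hp : p.natDegree ≤ 1)
    (hr : 0 < r) (hb : b ∈ ball c r) (hb' : -b ∈ ball c r) {G : Set ℂ} (hG : IsOpen G)
    (hsph : sphere c r ⊆ G) {f g : ℕ → ℂ → ℂ} {α β : ℕ → ℂ}
    (hg : ∀ n, DifferentiableOn ℂ (g n) G)
    (hdecomp : ∀ n, ∀ t ∈ G, f n t = α n + β n * t + (t ^ 2 - b ^ 2) * g n t)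
    (hstep : ∀ n, ∀ t ∈ G, f (n + 1) t = deriv (g n) t) (n : ℕ) :
    (∮ z in C(c, r), K n z * f 0 z) = ∮ z in C(c, r), K 0 z * f n z := by
  induction n generalizing f g α β with
  | zero => rfl
  | succ n ih =>
    rw [hK.circleIntegral_succ_mul_eq hp hr hb hb' hG hsph (hg 0) (hdecomp 0),
      ← ih (fun k => hg (k + 1)) (fun k => hdecomp (k + 1)) (fun k => hstep (k + 1))]
    exact circleIntegral.integral_congr hr.le fun z hz => by simp only [hstep 0 z (hsph hz)]

end IsBleisteinKernel

/-- Cauchy-type integral representations `αₙ = (1/(2πi)) ∮ Aₙ(s) f₀(s) ds` and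
`βₙ = (1/(2πi)) ∮ Bₙ(s) f₀(s) ds` for the coefficients of the Bleistein scheme, where
`A₀(s) = s/(s²−b²)`, `B₀(s) = 1/(s²−b²)` and `Xₙ₊₁(s) = (−1/(s²−b²))·Xₙ′(s)`. -/
theorem bleistein_coeff_cauchy_repr
    (c : ℂ) (r : ℝ) (hr : 0 < r) (G : Set ℂ) (hG : IsOpen G)
    (hGsub : closedBall c r ⊆ G)
    (b : ℂ) (hb : b ≠ 0) (hbmem : b ∈ ball c r) (hbmem' : -b ∈ ball c r)
    (f g : ℕ → ℂ → ℂ) (α β : ℕ → ℂ)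
    (hf : ∀ n, DifferentiableOn ℂ (f n) G)
    (hg : ∀ n, DifferentiableOn ℂ (g n) G)
    (hα : ∀ n, α n = (f n b + f n (-b)) / 2)
    (hβ : ∀ n, β n = (f n b - f n (-b)) / (2 * b))
    (hdecomp : ∀ n, ∀ t ∈ G, f n t = α n + β n * t + (t ^ 2 - b ^ 2) * g n t)
    (hstep : ∀ n, ∀ t ∈ G, f (n + 1) t = deriv (g n) t)
    (A B : ℕ → ℂ → ℂ)
    (hA0 : ∀ s : ℂ, A 0 s = s / (s ^ 2 - b ^ 2))
    (hB0 : ∀ s : ℂ, B 0 s = 1 / (s ^ 2 - b ^ 2))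
    (hAsucc : ∀ n, ∀ s : ℂ, A (n + 1) s = (-(s ^ 2 - b ^ 2)⁻¹) * deriv (A n) s)
    (hBsucc : ∀ n, ∀ s : ℂ, B (n + 1) s = (-(s ^ 2 - b ^ 2)⁻¹) * deriv (B n) s) :
    ∀ n : ℕ,
      α n = (2 * (Real.pi : ℂ) * Complex.I)⁻¹ * (∮ s in C(c, r), A n s * f 0 s) ∧
      β n = (2 * (Real.pi : ℂ) * Complex.I)⁻¹ * (∮ s in C(c, r), B n s * f 0 s) := by
  intro n
  have hsph : sphere c r ⊆ G := sphere_subset_closedBall.trans hGsub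
  have hfn : DifferentiableOn ℂ (f n) (closedBall c r) := (hf n).mono hGsub
  have hA : IsBleisteinKernel b X A := ⟨fun s => by simp [hA0], hAsucc⟩
  have hB : IsBleisteinKernel b 1 B := ⟨fun s => by simp [hB0], hBsucc⟩
  rw [hA.circleIntegral_mul_eq natDegree_X_le hr hbmem hbmem' hG hsph hg hdecomp hstep,
    hB.circleIntegral_mul_eq (by simp) hr hbmem hbmem' hG hsph hg hdecomp hstep]
  simp only [hA0, hB0]
  rw [circleIntegral_div_sq_sub_sq_mul hfn hb hbmem hbmem',
    circleIntegral_one_div_sq_sub_sq_mul hfn hb hbmem hbmem',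
    inv_mul_cancel_left₀ two_pi_I_ne_zero, inv_mul_cancel_left₀ two_pi_I_ne_zero]
  exact ⟨hα n, hβ n⟩
end

section
/- Let c ∈ ℂ, r > 0, let G be an open set containing the closed disc {s : |s − c| ≤ r}, and let f be holomorphic on G. Let b ∈ ℂ, b ≠ 0, with b and −b in the open disc {s : |s − c| < r}. Set α₀ = (f(b) + f(−b))/2, β₀ = (f(b) − f(−b))/(2b), and let g be holomorphic on G with f(s) = α₀ + β₀·s + (s² − b²)·g(s) for all s ∈ G. Then for every t in the open disc with t ≠ b and t ≠ −b, g(t) = (1/(2πi)) ∮_{|s−c|=r} f(s)/((s − t)(s² − b²)) ds, the contour traversed once counterclockwise. -/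
open Complex Metric

private lemma circleIntegral_add {f g : ℂ → ℂ} {c : ℂ} {R : ℝ}
    (hf : CircleIntegrable f c R) (hg : CircleIntegrable g c R) :
    (∮ z in C(c, R), (f z + g z)) = (∮ z in C(c, R), f z) + ∮ z in C(c, R), g z := by
  simp only [circleIntegral, smul_add]
  exact intervalIntegral.integral_add hf.out hg.out

private lemma partial_fraction_aux (α₀ β₀ s t b gs : ℂ) (h1 : s - t ≠ 0) (h2 : s - b ≠ 0)
    (h3 : s + b ≠ 0) (h4 : t - b ≠ 0) (h5 : t + b ≠ 0) (hb : b ≠ 0)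
    (h6 : s ^ 2 - b ^ 2 ≠ 0) (h7 : b - t ≠ 0) :
    (α₀ + β₀ * s + (s ^ 2 - b ^ 2) * gs) / ((s - t) * (s ^ 2 - b ^ 2)) =
      (s - t)⁻¹ * gs + ((α₀ + β₀ * t) / ((t - b) * (t + b)) * (s - t)⁻¹ +
        ((α₀ + β₀ * b) / ((b - t) * (2 * b)) * (s - b)⁻¹ +
         (α₀ - β₀ * b) / ((t + b) * (2 * b)) * (s + b)⁻¹)) := by
  have h2b : (2 : ℂ) * b ≠ 0 := mul_ne_zero two_ne_zero hb
  have hd0 : (s - t) ≠ 0 := h1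
  have hd1 : (t - b) * (t + b) * (s - t) ≠ 0 := mul_ne_zero (mul_ne_zero h4 h5) h1
  have hd2 : (b - t) * (2 * b) * (s - b) ≠ 0 := mul_ne_zero (mul_ne_zero h7 h2b) h2
  have hd3 : (t + b) * (2 * b) * (s + b) ≠ 0 := mul_ne_zero (mul_ne_zero h5 h2b) h3
  rw [inv_mul_eq_div]
  simp only [← div_eq_mul_inv, div_div]
  rw [div_add_div _ _ hd2 hd3, div_add_div _ _ hd1 (mul_ne_zero hd2 hd3),
    div_add_div _ _ hd0 (mul_ne_zero hd1 (mul_ne_zero hd2 hd3)),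
    div_eq_div_iff (mul_ne_zero h1 h6)
      (mul_ne_zero hd0 (mul_ne_zero hd1 (mul_ne_zero hd2 hd3)))]
  ring

/-- Cauchy-type integral representation for the function `g` in the Bleistein decomposition
`f(t) = α₀ + β₀·t + (t² − b²)·g(t)`. -/
theorem cauchy_repr_g
    (c : ℂ) (r : ℝ) (hr : 0 < r) (G : Set ℂ) (hG : IsOpen G)
    (hGsub : closedBall c r ⊆ G)
    (f : ℂ → ℂ) (hf : DifferentiableOn ℂ f G)
    (b : ℂ) (hb : b ≠ 0) (hbmem : b ∈ ball c r) (hbmem' : -b ∈ ball c r)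
    (α₀ β₀ : ℂ)
    (hα₀ : α₀ = (f b + f (-b)) / 2)
    (hβ₀ : β₀ = (f b - f (-b)) / (2 * b))
    (g : ℂ → ℂ) (hg : DifferentiableOn ℂ g G)
    (hdecomp : ∀ s ∈ G, f s = α₀ + β₀ * s + (s ^ 2 - b ^ 2) * g s) :
    ∀ t ∈ ball c r, t ≠ b → t ≠ -b →
      g t = (2 * (Real.pi : ℂ) * Complex.I)⁻¹ *
        (∮ s in C(c, r), f s / ((s - t) * (s ^ 2 - b ^ 2))) := by
  intro t ht htb htb'
  have htb1 : t - b ≠ 0 := sub_ne_zero.mpr htb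
  have htb2 : t + b ≠ 0 := fun h => htb' (by linear_combination h)
  set A : ℂ := (α₀ + β₀ * t) / ((t - b) * (t + b)) with hA
  set B : ℂ := (α₀ + β₀ * b) / ((b - t) * (2 * b)) with hB
  set C : ℂ := (α₀ - β₀ * b) / ((t + b) * (2 * b)) with hC
  have hsub : sphere c r ⊆ G := fun s hs => hGsub (sphere_subset_closedBall hs)
  have hmem : ∀ s ∈ sphere c r, s ≠ t ∧ s ≠ b ∧ s ≠ -b := by
    intro s hs
    have hst : s ∉ ball c r := by
      simp only [mem_sphere_iff_norm] at hs
      simp [mem_ball, dist_eq_norm, hs]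
    exact ⟨fun h => hst (h ▸ ht), fun h => hst (h ▸ hbmem), fun h => hst (h ▸ hbmem')⟩
  -- pointwise decomposition of the integrand on the circle
  have key : Set.EqOn (fun s => f s / ((s - t) * (s ^ 2 - b ^ 2)))
      (fun s => (s - t)⁻¹ • g s + (A * (s - t)⁻¹ + (B * (s - b)⁻¹ + C * (s - (-b))⁻¹)))
      (sphere c r) := by
    intro s hs
    obtain ⟨hst, hsb, hsb'⟩ := hmem s hs
    have h1 : s - t ≠ 0 := sub_ne_zero.mpr hst
    have h2 : s - b ≠ 0 := sub_ne_zero.mpr hsb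
    have h3 : s + b ≠ 0 := fun h => hsb' (by linear_combination h)
    have hbt : b - t ≠ 0 := fun h => htb (by linear_combination -h)
    have hD : (s - t) * (s ^ 2 - b ^ 2) ≠ 0 := by
      apply mul_ne_zero h1
      have hfac : s ^ 2 - b ^ 2 = (s - b) * (s + b) := by ring
      rw [hfac]; exact mul_ne_zero h2 h3
    have hsq : s ^ 2 - b ^ 2 ≠ 0 := by
      have hfac : s ^ 2 - b ^ 2 = (s - b) * (s + b) := by ring
      rw [hfac]; exact mul_ne_zero h2 h3
    have htq : t ^ 2 - b ^ 2 ≠ 0 := by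
      have hfac : t ^ 2 - b ^ 2 = (t - b) * (t + b) := by ring
      rw [hfac]; exact mul_ne_zero htb1 htb2
    have htq' : b ^ 2 - t ^ 2 ≠ 0 := fun h => htq (by linear_combination -h)
    simp only [smul_eq_mul, hA, hB, hC, sub_neg_eq_add]
    rw [hdecomp s (hsub hs)]
    exact partial_fraction_aux α₀ β₀ s t b (g s) h1 h2 h3 htb1 htb2 hb hsq hbt
  have hcont_inv : ∀ w : ℂ, w ∈ ball c r →
      ContinuousOn (fun s => (s - w)⁻¹) (sphere c r) := by
    intro w hw
    apply ContinuousOn.inv₀ (by fun_prop)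
    intro s hs
    exact sub_ne_zero.mpr fun h => (by
      have hst : s ∉ ball c r := by
        simp only [mem_sphere_iff_norm] at hs
        simp [mem_ball, dist_eq_norm, hs]
      exact hst (h ▸ hw))
  have hgc : ContinuousOn g (sphere c r) := (hg.continuousOn).mono hsub
  have hi1 : CircleIntegrable (fun s => (s - t)⁻¹ • g s) c r :=
    ((hcont_inv t ht).smul hgc).circleIntegrable hr.le
  have hi2 : CircleIntegrable (fun s => A * (s - t)⁻¹) c r :=
    (continuousOn_const.mul (hcont_inv t ht)).circleIntegrable hr.le
  have hi3 : CircleIntegrable (fun s => B * (s - b)⁻¹) c r :=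
    (continuousOn_const.mul (hcont_inv b hbmem)).circleIntegrable hr.le
  have hi4 : CircleIntegrable (fun s => C * (s - (-b))⁻¹) c r :=
    (continuousOn_const.mul (hcont_inv (-b) hbmem')).circleIntegrable hr.le
  have hgint : (∮ z in C(c, r), (z - t)⁻¹ • g z) = (2 * ↑Real.pi * I) • g t :=
    (hg.mono hGsub).circleIntegral_sub_inv_smul ht
  have hint : (∮ s in C(c, r), f s / ((s - t) * (s ^ 2 - b ^ 2)))
      = (2 * ↑Real.pi * I) • g t + (A * (2 * ↑Real.pi * I) +
          (B * (2 * ↑Real.pi * I) + C * (2 * ↑Real.pi * I))) := by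
    have e2 : (∮ s in C(c, r), A * (s - t)⁻¹) = A * (2 * ↑Real.pi * I) := by
      have hs := circleIntegral.integral_smul A (fun s => (s - t)⁻¹) c r
      simp only [smul_eq_mul] at hs
      rw [hs, circleIntegral.integral_sub_inv_of_mem_ball ht]
    have e3 : (∮ s in C(c, r), B * (s - b)⁻¹) = B * (2 * ↑Real.pi * I) := by
      have hs := circleIntegral.integral_smul B (fun s => (s - b)⁻¹) c r
      simp only [smul_eq_mul] at hs
      rw [hs, circleIntegral.integral_sub_inv_of_mem_ball hbmem]
    have e4 : (∮ s in C(c, r), C * (s - (-b))⁻¹) = C * (2 * ↑Real.pi * I) := by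
      have hs := circleIntegral.integral_smul C (fun s => (s - (-b))⁻¹) c r
      simp only [smul_eq_mul] at hs
      rw [hs, circleIntegral.integral_sub_inv_of_mem_ball hbmem']
    have hi34 : CircleIntegrable (fun s => B * (s - b)⁻¹ + C * (s - (-b))⁻¹) c r := hi3.add hi4
    have hi234 : CircleIntegrable
        (fun s => A * (s - t)⁻¹ + (B * (s - b)⁻¹ + C * (s - (-b))⁻¹)) c r := hi2.add hi34
    rw [circleIntegral.integral_congr hr.le key,
      circleIntegral_add hi1 hi234,
      circleIntegral_add hi2 hi34,
      circleIntegral_add hi3 hi4, hgint, e2, e3, e4]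
  have hABC : A + B + C = 0 := by
    rw [hA, hB, hC]
    have h2b : (2 : ℂ) * b ≠ 0 := by simp [hb]
    have hbt : b - t ≠ 0 := fun h => htb (by linear_combination -h)
    field_simp
    ring
  have hpi : (2 * (Real.pi : ℂ) * I) ≠ 0 := by
    simp [Real.pi_ne_zero, I_ne_zero]
  have hz : A * (2 * ↑Real.pi * I) + (B * (2 * ↑Real.pi * I) + C * (2 * ↑Real.pi * I)) = 0 := by
    linear_combination (2 * (Real.pi : ℂ) * I) * hABC
  rw [hint, hz, add_zero, smul_eq_mul, inv_mul_cancel_left₀ hpi]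
end

section
/- Let b ∈ ℂ, b ≠ 0, and let k ≥ 1 be an integer. For every t ∈ ℂ with |t − b| < 2|b|, the series Σ_{m=0}^{∞} (−1)^m · (k − m) · (k + m − 1)! / ((2b)^{k+m} · m! · k!) · (t − b)^m converges and its sum equals 2t/(t + b)^{k+1}. (Here k − m is taken as an integer, possibly negative.) -/
/-!
Put `z = (b - t) / (2b)`, so that `t + b = 2b (1 - z)`, `2t = 2b (1 - 2z)` and `‖z‖ < 1`. The claim
becomes `(2b)⁻ᵏ` times the expansion of
`(1 - 2z) / (1 - z)^(k+1) = 1 / (1 - z)^k - z / (1 - z)^(k+1)`. Both terms are negative binomial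
series, and the difference of their coefficients is
`C(m+k-1, k-1) - C(m+k-1, k) = (k - m) (k+m-1)! / (m! k!)`.
-/

section

variable {𝕜 : Type*} [NormedField 𝕜] {z : 𝕜}

theorem hasSum_choose_succ_mul_geometric (j : ℕ) (hz : ‖z‖ < 1) :
    HasSum (fun m : ℕ => ((m + j).choose (j + 1) : 𝕜) * z ^ m) (z / (1 - z) ^ (j + 2)) := by
  refine (hasSum_nat_add_iff' 1).mp ?_
  simp only [Finset.sum_range_one, zero_add, Nat.choose_succ_self, Nat.cast_zero, zero_mul,
    sub_zero]
  convert! (hasSum_choose_mul_geometric_of_norm_lt_one (j + 1) hz).mul_left z using 1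
  · funext m
    rw [Nat.add_right_comm, Nat.add_assoc, pow_succ]
    ring
  · ring

theorem hasSum_choose_sub_choose_succ_mul_geometric (j : ℕ) (hz : ‖z‖ < 1) :
    HasSum (fun m : ℕ => (((m + j).choose j : 𝕜) - (m + j).choose (j + 1)) * z ^ m)
      ((1 - 2 * z) / (1 - z) ^ (j + 2)) := by
  have h1z : 1 - z ≠ 0 := by
    intro h
    rw [← eq_of_sub_eq_zero h, norm_one] at hz
    exact hz.false
  simp only [sub_mul]
  convert! (hasSum_choose_mul_geometric_of_norm_lt_one j hz).sub
    (hasSum_choose_succ_mul_geometric j hz) using 1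
  rw [pow_succ _ (j + 1)]
  field_simp
  ring

theorem cast_choose_sub_choose_succ [CharZero 𝕜] (n j : ℕ) :
    ((n + j).choose j : 𝕜) - (n + j).choose (j + 1)
      = ((j + 1 : 𝕜) - n) * (n + j).factorial / (n.factorial * (j + 1).factorial) := by
  have hsucc : ((n + j).choose (j + 1) : 𝕜) * (j + 1) = (n + j).choose j * n := by
    exact_mod_cast (Nat.choose_succ_right_eq (n + j) j).trans (by rw [Nat.add_sub_cancel])
  have hchoose : ((n + j).choose j : 𝕜) = (n + j).factorial / (n.factorial * j.factorial) := by
    rw [Nat.cast_choose 𝕜 (Nat.le_add_left j n), Nat.add_sub_cancel, mul_comm]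
  have hj : (j + 1 : 𝕜) ≠ 0 := Nat.cast_add_one_ne_zero j
  rw [Nat.factorial_succ, Nat.cast_mul, Nat.cast_succ, mul_comm _ (j.factorial : 𝕜),
    eq_div_of_mul_eq hj hsucc, hchoose]
  field_simp

end

/-- The power-series expansion `2t/(t+b)^{k+1} = Σ_m q_m (t−b)^m` around `t = b`, with
`q_m = (−1)^m (k−m)(k+m−1)!/((2b)^{k+m} m! k!)`, valid for `|t − b| < 2|b|`. -/
theorem two_t_div_pow_expansion
    (b : ℂ) (hb : b ≠ 0) (k : ℕ) (hk : 1 ≤ k)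
    (t : ℂ) (ht : ‖t - b‖ < 2 * ‖b‖) :
    HasSum
      (fun m : ℕ =>
        (-1) ^ m * ((k : ℂ) - (m : ℂ)) * (((k + m - 1).factorial : ℕ) : ℂ) /
          ((2 * b) ^ (k + m) * (m.factorial : ℂ) * (k.factorial : ℂ)) * (t - b) ^ m)
      (2 * t / (t + b) ^ (k + 1)) := by
  obtain ⟨j, rfl⟩ : ∃ j, k = j + 1 := ⟨k - 1, by omega⟩
  have h2b : 2 * b ≠ 0 := mul_ne_zero two_ne_zero hb
  set z := -((t - b) / (2 * b)) with hz_def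
  have hz : ‖z‖ < 1 := by
    rwa [norm_neg, norm_div, div_lt_one (norm_pos_iff.2 h2b), norm_mul, Complex.norm_two]
  have h1z : 1 - z = (t + b) / (2 * b) := by rw [hz_def]; field_simp; ring
  have h12z : 1 - 2 * z = 2 * t / (2 * b) := by rw [hz_def]; field_simp; ring
  convert! (hasSum_choose_sub_choose_succ_mul_geometric j hz).mul_left ((2 * b) ^ (j + 1))⁻¹
    using 1
  · funext m
    rw [cast_choose_sub_choose_succ, show j + 1 + m - 1 = m + j by omega, hz_def,
      neg_pow ((t - b) / (2 * b)), div_pow]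
    push_cast
    field_simp
    ring
  · rw [h1z, h12z, div_pow]
    field_simp
    ring
end

section
/- Let b ∈ ℂ, b ≠ 0, let h : ℂ → ℂ be entire, and define f(t) = h(t²). Then for every integer k ≥ 1, h^{(k)}(b²)/k! = Σ_{j=1}^{k} (−1)^{k−j} · j · (2k−j−1)! / ((2b)^{2k−j} · k! · (k−j)!) · f^{(j)}(b)/j!. Moreover h(b²) = f(b). -/
/-!
Put `g_k(t) = h^{(k)}(t²)`. The chain rule gives `g_{k+1}(t) = g_k'(t) / (2t)` for `t ≠ 0`, so
`h^{(k)}(t²)` is obtained from `f` by applying the operator `(2t)⁻¹ d/dt` `k` times. Expanding this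
by induction on `k` gives `h^{(k)}(t²) = ∑_{j=1}^k c_{kj} f^{(j)}(t) / (2t)^{2k-j}` with
`c_{kj} = (-1)^{k-j} (2k-j-1)! / ((k-j)! (j-1)!)`: these are exactly the coefficients solving the
Pascal-type recurrence `c_{k+1,j} = c_{k,j-1} - 2(2k-j) c_{k,j}` produced by differentiating.
-/

open Finset

open Nat in
/-- The factor `j / j!` in place of `1 / (j-1)!` makes the coefficient vanish at `j = 0`. -/
noncomputable def evenPartCoeff (k j : ℕ) : ℂ :=
  (-1) ^ (k - j) * j * (2 * k - j - 1)! / ((k - j)! * j !)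

@[simp]
lemma evenPartCoeff_zero_right (k : ℕ) : evenPartCoeff k 0 = 0 := by
  simp [evenPartCoeff]

lemma evenPartCoeff_self {k : ℕ} (hk : 1 ≤ k) : evenPartCoeff k k = 1 := by
  obtain ⟨k, rfl⟩ := Nat.exists_eq_add_of_le' hk
  rw [evenPartCoeff, show 2 * (k + 1) - (k + 1) - 1 = k by omega, Nat.sub_self,
    Nat.factorial_succ]
  push_cast
  field_simp
  simp [Nat.factorial_ne_zero]

lemma evenPartCoeff_succ {k j : ℕ} (hj : j ≤ k) :
    evenPartCoeff (k + 1) j =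
      evenPartCoeff k (j - 1) - 2 * (2 * k - j : ℕ) * evenPartCoeff k j := by
  rcases Nat.eq_zero_or_pos j with rfl | hj0
  · simp
  obtain ⟨i, rfl⟩ := Nat.exists_eq_add_of_le' hj0
  obtain ⟨n, rfl⟩ := Nat.exists_eq_add_of_le hj
  simp only [evenPartCoeff]
  rw [show i + 1 + n + 1 - (i + 1) = n + 1 by omega, show i + 1 - 1 = i by omega,
    show i + 1 + n - i = n + 1 by omega, show i + 1 + n - (i + 1) = n by omega,
    show 2 * (i + 1 + n + 1) - (i + 1) - 1 = i + 2 * n + 2 by omega,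
    show 2 * (i + 1 + n) - i - 1 = i + 2 * n + 1 by omega,
    show 2 * (i + 1 + n) - (i + 1) - 1 = i + 2 * n by omega,
    show 2 * (i + 1 + n) - (i + 1) = i + 2 * n + 1 by omega]
  simp only [Nat.factorial_succ, pow_succ]
  push_cast
  field_simp
  ring

lemma sum_evenPartCoeff_succ {k : ℕ} (hk : 1 ≤ k) (G : ℕ → ℂ) :
    ∑ j ∈ range (k + 1), evenPartCoeff k j * (G (j + 1) - 2 * (2 * k - j : ℕ) * G j) =
      ∑ j ∈ range (k + 2), evenPartCoeff (k + 1) j * G j := by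
  have hshift : ∑ j ∈ range (k + 2), evenPartCoeff k (j - 1) * G j =
      ∑ j ∈ range (k + 1), evenPartCoeff k j * G (j + 1) := by
    simp [sum_range_succ' _ (k + 1)]
  calc ∑ j ∈ range (k + 1), evenPartCoeff k j * (G (j + 1) - 2 * (2 * k - j : ℕ) * G j)
      = ∑ j ∈ range (k + 2), evenPartCoeff k (j - 1) * G j -
          ∑ j ∈ range (k + 1), 2 * (2 * k - j : ℕ) * evenPartCoeff k j * G j := by
        rw [hshift, ← sum_sub_distrib]
        exact sum_congr rfl fun j _ => by ring
    _ = ∑ j ∈ range (k + 1),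
            (evenPartCoeff k (j - 1) - 2 * (2 * k - j : ℕ) * evenPartCoeff k j) * G j +
          evenPartCoeff k k * G (k + 1) := by
        rw [sum_range_succ _ (k + 1), add_sub_right_comm, ← sum_sub_distrib]
        simp only [sub_mul, Nat.add_sub_cancel]
    _ = ∑ j ∈ range (k + 2), evenPartCoeff (k + 1) j * G j := by
        rw [sum_range_succ _ (k + 1), evenPartCoeff_self hk, evenPartCoeff_self (by omega)]
        congr 1
        refine sum_congr rfl fun j hj => ?_
        rw [evenPartCoeff_succ (Nat.lt_succ_iff.mp (mem_range.mp hj))]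

lemma Differentiable.hasDerivAt_iteratedDeriv {E : Type*} [NormedAddCommGroup E]
    [NormedSpace ℂ E] [CompleteSpace E] {F : ℂ → E} (hF : Differentiable ℂ F) (m : ℕ) (x : ℂ) :
    HasDerivAt (iteratedDeriv m F) (iteratedDeriv (m + 1) F x) x := by
  rw [iteratedDeriv_succ]
  exact (hF.contDiff.differentiable_iteratedDeriv' m x).hasDerivAt

lemma HasDerivAt.div_const_mul_pow {𝕜 : Type*} [NontriviallyNormedField 𝕜] {F : 𝕜 → 𝕜}
    {F' x : 𝕜} (hF : HasDerivAt F F' x) {c : 𝕜} (hcx : c * x ≠ 0) (n : ℕ) :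
    HasDerivAt (fun u => F u / (c * u) ^ n)
      (F' / (c * x) ^ n - c * n * F x / (c * x) ^ (n + 1)) x := by
  refine (hF.fun_div (((hasDerivAt_id' x).const_mul c).fun_pow n)
    (pow_ne_zero n hcx)).congr_deriv ?_
  obtain _ | n := n
  · simp
  · rw [Nat.add_sub_cancel]
    field_simp
    ring

lemma iteratedDeriv_succ_apply_sq_eq_div {h : ℂ → ℂ} (hh : Differentiable ℂ h) {k : ℕ} {t : ℂ}
    (ht : t ≠ 0) {S : ℂ → ℂ} {S' : ℂ} (hS : HasDerivAt S S' t)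
    (heq : (fun u => iteratedDeriv k h (u ^ 2)) =ᶠ[nhds t] S) :
    iteratedDeriv (k + 1) h (t ^ 2) = S' / (2 * t) := by
  have hsq : HasDerivAt (fun u : ℂ => u ^ 2) (2 * t) t := by simpa using hasDerivAt_pow 2 t
  have hchain := (hh.hasDerivAt_iteratedDeriv k (t ^ 2)).comp t hsq
  rw [← hchain.unique (hS.congr_of_eventuallyEq heq)]
  field_simp

theorem iteratedDeriv_apply_sq_eq_sum {h : ℂ → ℂ} (hh : Differentiable ℂ h) {k : ℕ} (hk : 1 ≤ k)
    {t : ℂ} (ht : t ≠ 0) :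
    iteratedDeriv k h (t ^ 2) = ∑ j ∈ range (k + 1),
      evenPartCoeff k j * (iteratedDeriv j (fun u => h (u ^ 2)) t / (2 * t) ^ (2 * k - j)) := by
  set f : ℂ → ℂ := fun u => h (u ^ 2)
  have hf : Differentiable ℂ f := hh.comp (differentiable_pow 2)
  induction k, hk using Nat.le_induction generalizing t with
  | base =>
    have hf' := hf.hasDerivAt_iteratedDeriv 0 t
    rw [iteratedDeriv_zero] at hf'
    rw [iteratedDeriv_succ_apply_sq_eq_div hh ht hf' (by simp [f])]
    simp [sum_range_succ, evenPartCoeff_self]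
  | succ k hk ih =>
    have h2t : (2 : ℂ) * t ≠ 0 := mul_ne_zero two_ne_zero ht
    have hS := HasDerivAt.fun_sum fun j (_ : j ∈ range (k + 1)) =>
      ((hf.hasDerivAt_iteratedDeriv j t).div_const_mul_pow h2t (2 * k - j)).const_mul
        (evenPartCoeff k j)
    rw [iteratedDeriv_succ_apply_sq_eq_div hh ht hS
      ((eventually_ne_nhds ht).mono fun u hu => ih hu), sum_div,
      ← sum_evenPartCoeff_succ hk fun j => iteratedDeriv j f t / (2 * t) ^ (2 * (k + 1) - j)]
    refine sum_congr rfl fun j hj => ?_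
    have hjk := Nat.lt_succ_iff.mp (mem_range.mp hj)
    rw [show 2 * (k + 1) - (j + 1) = 2 * k - j + 1 by omega,
      show 2 * (k + 1) - j = 2 * k - j + 1 + 1 by omega]
    field_simp
    ring

/-- For an even analytic function `f(t) = h(t²)`, the Taylor coefficients `γ_k` of `h` at `b²`
are finite linear combinations of the Taylor coefficients of `f` at `b` (formula (a10)). -/
theorem even_part_coefficients
    (b : ℂ) (hb : b ≠ 0) (h : ℂ → ℂ) (hh : Differentiable ℂ h) :
    (∀ k : ℕ, 1 ≤ k →
      iteratedDeriv k h (b ^ 2) / (k.factorial : ℂ) =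
        ∑ j ∈ Icc 1 k,
          ((-1) ^ (k - j) * (j : ℂ) * ((2 * k - j - 1).factorial : ℂ) /
            ((2 * b) ^ (2 * k - j) * (k.factorial : ℂ) * ((k - j).factorial : ℂ))) *
          (iteratedDeriv j (fun t => h (t ^ 2)) b / (j.factorial : ℂ))) ∧
    h (b ^ 2) = (fun t => h (t ^ 2)) b := by
  refine ⟨fun k hk => ?_, rfl⟩
  rw [iteratedDeriv_apply_sq_eq_sum hh hk hb, sum_div, range_eq_Ico,
    sum_eq_sum_Ico_succ_bot (Nat.add_one_pos k), zero_add, Ico_add_one_right_eq_Icc,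
    evenPartCoeff_zero_right, zero_mul, zero_div, zero_add]
  refine sum_congr rfl fun j _ => ?_
  rw [evenPartCoeff]
  ring
end

section
/- Let b ∈ ℂ, b ≠ 0, and let G, D : ℂ → ℂ be entire with Taylor coefficients γ_k = G^{(k)}(0)/k! and δ_k = D^{(k)}(0)/k!. Let G̃, D̃ be the entire functions with z·G̃(z) = G(z) − G(0) and z·D̃(z) = D(z) − D(0), define g(t) = G̃(t² − b²) + t·D̃(t² − b²), and set G₁(z) = D̃(z) + 2(z + b²)·D̃′(z) and D₁(z) = 2·G̃′(z). Then: (i) g′(t) = G₁(t² − b²) + t·D₁(t² − b²) for all t ∈ ℂ; (ii) the k-th Taylor coefficient of G₁ at 0 equals (2k+1)·δ_{k+1} + 2b²(k+1)·δ_{k+2}; (iii) the k-th Taylor coefficient of D₁ at 0 equals 2(k+1)·γ_{k+2}. -/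
/-!
Differentiating `g` is the chain rule for `u = t² − b²`, using `2t² = 2(u + b²)`. The coefficient
formulas rest on two facts about Taylor coefficients at `0`: the relation `z·G̃(z) = G(z) − G(0)`
shifts them by one, so `G̃` and `D̃` have coefficients `γ_{k+1}` and `δ_{k+1}`; and by Leibniz's
rule the operator `f ↦ z·f′` multiplies the `k`-th coefficient by `k`.
-/

open scoped Nat

section

variable {𝕜 : Type*} [NontriviallyNormedField 𝕜]

lemma iteratedDeriv_succ_fun_id_mul_zero {f : 𝕜 → 𝕜} {n : ℕ} (hf : ContDiffAt 𝕜 (n + 1) f 0) :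
    iteratedDeriv (n + 1) (fun z => z * f z) 0 = (n + 1) * iteratedDeriv n f 0 := by
  rw [iteratedDeriv_fun_mul (f := fun z : 𝕜 => z) contDiffAt_fun_id hf, Finset.sum_eq_single 1]
  · simp [iteratedDeriv_fun_id_zero]
  · intro i _ hi
    simp [iteratedDeriv_fun_id_zero, hi]
  · simp

lemma iteratedDeriv_fun_id_mul_deriv_zero {f : 𝕜 → 𝕜} {k : ℕ} (hf : ContDiff 𝕜 (k + 1) f) :
    iteratedDeriv k (fun z => z * deriv f z) 0 = k * iteratedDeriv k f 0 := by
  cases k with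
  | zero => simp
  | succ m =>
    rw [iteratedDeriv_succ_fun_id_mul_zero hf.deriv'.contDiffAt, ← iteratedDeriv_succ',
      Nat.cast_succ]

lemma iteratedDeriv_succ_zero_of_mul_eq_sub {f F : 𝕜 → 𝕜} {n : ℕ}
    (hf : ContDiffAt 𝕜 (n + 1) f 0) (h : ∀ z, z * f z = F z - F 0) :
    iteratedDeriv (n + 1) F 0 = (n + 1) * iteratedDeriv n f 0 := by
  have hF : F = fun z => F 0 + z * f z := funext fun z => by rw [h]; ring
  rw [hF, iteratedDeriv_const_add n.succ_pos, iteratedDeriv_succ_fun_id_mul_zero hf]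

lemma iteratedDeriv_fun_add_two_mul_add_mul_deriv_zero {f : 𝕜 → 𝕜} (c : 𝕜) {k : ℕ}
    (hf : ContDiff 𝕜 (k + 1) f) :
    iteratedDeriv k (fun z => f z + 2 * (z + c) * deriv f z) 0 =
      (2 * k + 1) * iteratedDeriv k f 0 + 2 * c * iteratedDeriv (k + 1) f 0 := by
  have hfk : ContDiff 𝕜 k f := hf.of_succ
  have hf' : ContDiff 𝕜 k (deriv f) := hf.deriv'
  have hsplit : (fun z => f z + 2 * (z + c) * deriv f z) =
      fun z => (f z + 2 * (z * deriv f z)) + 2 * c * deriv f z := by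
    funext z; ring
  rw [hsplit, iteratedDeriv_fun_add (by fun_prop) (by fun_prop),
    iteratedDeriv_fun_add (by fun_prop) (by fun_prop), iteratedDeriv_const_mul_field,
    iteratedDeriv_const_mul_field, iteratedDeriv_fun_id_mul_deriv_zero hf, ← iteratedDeriv_succ']
  ring

lemma hasDerivAt_comp_sq_sub_add_mul_comp_sq_sub {A B : 𝕜 → 𝕜} (c t : 𝕜)
    (hA : DifferentiableAt 𝕜 A (t ^ 2 - c)) (hB : DifferentiableAt 𝕜 B (t ^ 2 - c)) :
    HasDerivAt (fun t => A (t ^ 2 - c) + t * B (t ^ 2 - c))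
      (B (t ^ 2 - c) + 2 * (t ^ 2 - c + c) * deriv B (t ^ 2 - c) +
        t * (2 * deriv A (t ^ 2 - c))) t := by
  have hu : HasDerivAt (fun t : 𝕜 => t ^ 2 - c) (2 * t) t := by
    simpa using (hasDerivAt_pow 2 t).sub_const c
  have hA' : HasDerivAt (fun t => A (t ^ 2 - c)) (deriv A (t ^ 2 - c) * (2 * t)) t :=
    hA.hasDerivAt.comp t hu
  have hB' : HasDerivAt (fun t => B (t ^ 2 - c)) (deriv B (t ^ 2 - c) * (2 * t)) t :=
    hB.hasDerivAt.comp t hu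
  refine (hA'.add ((hasDerivAt_id' t).mul hB')).congr_deriv ?_
  ring

end

lemma div_factorial_eq_succ_mul_div_factorial_succ {K : Type*} [Field K] [CharZero K]
    (x : K) (k : ℕ) : x / k ! = (k + 1) * (x / (k + 1)!) := by
  rw [Nat.factorial_succ]
  push_cast
  field_simp

lemma iteratedDeriv_div_factorial_eq_of_mul_eq_sub {f F : ℂ → ℂ} (hf : Differentiable ℂ f)
    (h : ∀ z, z * f z = F z - F 0) (n : ℕ) :
    iteratedDeriv n f 0 / n ! = iteratedDeriv (n + 1) F 0 / (n + 1)! := by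
  rw [iteratedDeriv_succ_zero_of_mul_eq_sub hf.contDiff.contDiffAt h, mul_div_assoc,
    ← div_factorial_eq_succ_mul_div_factorial_succ]

theorem bleistein_one_step_coefficients_general
    (b : ℂ)
    (G D : ℂ → ℂ)
    (γ δ : ℕ → ℂ)
    (hγ : ∀ k, γ k = iteratedDeriv k G 0 / (k.factorial : ℂ))
    (hδ : ∀ k, δ k = iteratedDeriv k D 0 / (k.factorial : ℂ))
    (Gt Dt : ℂ → ℂ) (hGt : Differentiable ℂ Gt) (hDt : Differentiable ℂ Dt)
    (hGtEq : ∀ z : ℂ, z * Gt z = G z - G 0)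
    (hDtEq : ∀ z : ℂ, z * Dt z = D z - D 0)
    (g : ℂ → ℂ)
    (hg : ∀ t : ℂ, g t = Gt (t ^ 2 - b ^ 2) + t * Dt (t ^ 2 - b ^ 2))
    (G₁ D₁ : ℂ → ℂ)
    (hG₁ : ∀ z : ℂ, G₁ z = Dt z + 2 * (z + b ^ 2) * deriv Dt z)
    (hD₁ : ∀ z : ℂ, D₁ z = 2 * deriv Gt z) :
    (∀ t : ℂ, deriv g t = G₁ (t ^ 2 - b ^ 2) + t * D₁ (t ^ 2 - b ^ 2)) ∧
    (∀ k : ℕ, iteratedDeriv k G₁ 0 / (k.factorial : ℂ) =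
      (2 * (k : ℂ) + 1) * δ (k + 1) + 2 * b ^ 2 * ((k : ℂ) + 1) * δ (k + 2)) ∧
    (∀ k : ℕ, iteratedDeriv k D₁ 0 / (k.factorial : ℂ) = 2 * ((k : ℂ) + 1) * γ (k + 2)) := by
  have hGt_coeff (k : ℕ) : iteratedDeriv k Gt 0 / k ! = γ (k + 1) := by
    rw [hγ, iteratedDeriv_div_factorial_eq_of_mul_eq_sub hGt hGtEq]
  have hDt_coeff (k : ℕ) : iteratedDeriv k Dt 0 / k ! = δ (k + 1) := by
    rw [hδ, iteratedDeriv_div_factorial_eq_of_mul_eq_sub hDt hDtEq]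
  refine ⟨fun t => ?_, fun k => ?_, fun k => ?_⟩
  · rw [funext hg, (hasDerivAt_comp_sq_sub_add_mul_comp_sq_sub (b ^ 2) t
      (hGt _) (hDt _)).deriv, hG₁, hD₁]
  · rw [funext hG₁, iteratedDeriv_fun_add_two_mul_add_mul_deriv_zero _ hDt.contDiff, add_div,
      mul_div_assoc, mul_div_assoc,
      div_factorial_eq_succ_mul_div_factorial_succ (iteratedDeriv (k + 1) Dt 0), hDt_coeff,
      hDt_coeff]
    ring
  · rw [funext hD₁, iteratedDeriv_const_mul_field, ← iteratedDeriv_succ', mul_div_assoc,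
      div_factorial_eq_succ_mul_div_factorial_succ, hGt_coeff]
    ring

/-- One step of the Bleistein scheme at the level of coefficients: if
`g(t) = G̃(t²−b²) + t·D̃(t²−b²)` where `z·G̃(z) = G(z) − G(0)`, `z·D̃(z) = D(z) − D(0)`,
then `g′(t) = G₁(t²−b²) + t·D₁(t²−b²)` with `G₁(z) = D̃(z) + 2(z+b²)D̃′(z)`, `D₁(z) = 2G̃′(z)`,
and the Taylor coefficients of `G₁, D₁` at `0` are `(2k+1)δ_{k+1} + 2b²(k+1)δ_{k+2}` and
`2(k+1)γ_{k+2}` respectively. -/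
theorem bleistein_one_step_coefficients
    (b : ℂ) (hb : b ≠ 0)
    (G D : ℂ → ℂ) (hG : Differentiable ℂ G) (hD : Differentiable ℂ D)
    (γ δ : ℕ → ℂ)
    (hγ : ∀ k, γ k = iteratedDeriv k G 0 / (k.factorial : ℂ))
    (hδ : ∀ k, δ k = iteratedDeriv k D 0 / (k.factorial : ℂ))
    (Gt Dt : ℂ → ℂ) (hGt : Differentiable ℂ Gt) (hDt : Differentiable ℂ Dt)
    (hGtEq : ∀ z : ℂ, z * Gt z = G z - G 0)
    (hDtEq : ∀ z : ℂ, z * Dt z = D z - D 0)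
    (g : ℂ → ℂ)
    (hg : ∀ t : ℂ, g t = Gt (t ^ 2 - b ^ 2) + t * Dt (t ^ 2 - b ^ 2))
    (G₁ D₁ : ℂ → ℂ)
    (hG₁ : ∀ z : ℂ, G₁ z = Dt z + 2 * (z + b ^ 2) * deriv Dt z)
    (hD₁ : ∀ z : ℂ, D₁ z = 2 * deriv Gt z) :
    (∀ t : ℂ, deriv g t = G₁ (t ^ 2 - b ^ 2) + t * D₁ (t ^ 2 - b ^ 2)) ∧
    (∀ k : ℕ, iteratedDeriv k G₁ 0 / (k.factorial : ℂ) =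
      (2 * (k : ℂ) + 1) * δ (k + 1) + 2 * b ^ 2 * ((k : ℂ) + 1) * δ (k + 2)) ∧
    (∀ k : ℕ, iteratedDeriv k D₁ 0 / (k.factorial : ℂ) = 2 * ((k : ℂ) + 1) * γ (k + 2)) :=
  bleistein_one_step_coefficients_general b G D γ δ hγ hδ Gt Dt hGt hDt hGtEq hDtEq g hg G₁ D₁ hG₁
    hD₁
end

section
/- Let θ, b ∈ ℝ with θ > 0 and b > 0, and set t = cosh θ. Suppose s is a complex-analytic function on an open neighborhood U ⊆ ℂ of b such that s(b) = e^{θ}, s′(b) is a positive real number, and (s(w)² − 2t·s(w) + 1)·s′(w) = s(w)·(w² − b²) for all w ∈ U. Then s′(b) = √(b·e^{θ}/sinh θ). -/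
open Filter Topology

/-- Differentiating `P(s) · s' = s · q` once at `z`, the `s''` term drops out because it is
multiplied by `P (s z) = 0`. -/
theorem mul_deriv_sq_eq_of_eventuallyEq_of_map_eq_zero {𝕜 : Type*} [NontriviallyNormedField 𝕜]
    {s P q : 𝕜 → 𝕜} {z P' q' : 𝕜} (hs : DifferentiableAt 𝕜 s z)
    (hs' : DifferentiableAt 𝕜 (deriv s) z) (hP : HasDerivAt P P' (s z)) (hPz : P (s z) = 0)
    (hq : HasDerivAt q q' z) (hode : (fun w => P (s w) * deriv s w) =ᶠ[𝓝 z] fun w => s w * q w) :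
    P' * deriv s z ^ 2 = deriv s z * q z + s z * q' := by
  have hL := (hP.comp z hs.hasDerivAt).mul hs'.hasDerivAt
  have hR := (hs.hasDerivAt.mul hq).congr_of_eventuallyEq hode
  have h := hL.unique hR
  rw [Function.comp_apply, hPz] at h
  linear_combination h

theorem Real.exp_sq_sub_two_mul_cosh_mul_exp_add_one (θ : ℝ) :
    Real.exp θ ^ 2 - 2 * Real.cosh θ * Real.exp θ + 1 = 0 := by
  rw [← Real.cosh_add_sinh]
  linear_combination -Real.cosh_sq_sub_sinh_sq θ

theorem saddle_mapping_first_coefficient_general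
    (θ b : ℝ) (hθ : 0 < θ)
    (t : ℝ) (ht : t = Real.cosh θ)
    (U : Set ℂ) (hU : IsOpen U) (hbU : (b : ℂ) ∈ U)
    (s : ℂ → ℂ) (hs : DifferentiableOn ℂ s U)
    (hsb : s (b : ℂ) = (Real.exp θ : ℂ))
    (hs'pos : ∃ c : ℝ, 0 < c ∧ deriv s (b : ℂ) = (c : ℂ))
    (hode : ∀ w ∈ U,
      (s w ^ 2 - 2 * (t : ℂ) * s w + 1) * deriv s w = s w * (w ^ 2 - (b : ℂ) ^ 2)) :
    deriv s (b : ℂ) = ((Real.sqrt (b * Real.exp θ / Real.sinh θ) : ℝ) : ℂ) := by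
  obtain ⟨c, hc, hcd⟩ := hs'pos
  subst ht
  have hP : HasDerivAt (fun x : ℂ => x ^ 2 - 2 * (Real.cosh θ : ℂ) * x + 1)
      (2 * s b - 2 * Real.cosh θ) (s b) := by
    simpa using ((hasDerivAt_pow 2 (s b)).sub ((hasDerivAt_id (s b)).const_mul
      (2 * (Real.cosh θ : ℂ)))).add_const 1
  have hPz : s b ^ 2 - 2 * (Real.cosh θ : ℂ) * s b + 1 = 0 := by
    rw [hsb]; exact_mod_cast Real.exp_sq_sub_two_mul_cosh_mul_exp_add_one θ
  have hq : HasDerivAt (fun w : ℂ => w ^ 2 - (b : ℂ) ^ 2) (2 * b) b := by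
    simpa using (hasDerivAt_pow 2 (b : ℂ)).sub_const ((b : ℂ) ^ 2)
  have key := mul_deriv_sq_eq_of_eventuallyEq_of_map_eq_zero
    (hs.differentiableAt (hU.mem_nhds hbU))
    (((hs.analyticOnNhd hU).deriv b hbU).differentiableAt) hP hPz hq
    (eventually_of_mem (hU.mem_nhds hbU) hode)
  have hsinh : Real.sinh θ * c ^ 2 = b * Real.exp θ := by
    rw [hcd, hsb, sub_self, mul_zero, zero_add] at key
    apply Complex.ofReal_injective
    push_cast at key ⊢
    linear_combination key / 2 + (c : ℂ) ^ 2 * Complex.cosh_add_sinh (θ : ℂ)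
  have hc2 : b * Real.exp θ / Real.sinh θ = c ^ 2 := by
    rw [← hsinh, mul_div_cancel_left₀ _ (Real.sinh_pos_iff.mpr hθ).ne']
  rw [hcd, hc2, Real.sqrt_sq hc.le]

/-- The first Taylor coefficient `s₁⁺ = s′(b)` of the saddle-point mapping for the parabolic
cylinder function: if `s` is analytic near `b`, `s(b) = e^θ`, `s′(b) > 0`, and
`(s² − 2ts + 1)·s′ = s·(w² − b²)` with `t = cosh θ`, then `s′(b) = √(b·e^θ/sinh θ)`. -/
theorem saddle_mapping_first_coefficient
    (θ b : ℝ) (hθ : 0 < θ) (hb : 0 < b)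
    (t : ℝ) (ht : t = Real.cosh θ)
    (U : Set ℂ) (hU : IsOpen U) (hbU : (b : ℂ) ∈ U)
    (s : ℂ → ℂ) (hs : DifferentiableOn ℂ s U)
    (hsb : s (b : ℂ) = (Real.exp θ : ℂ))
    (hs'pos : ∃ c : ℝ, 0 < c ∧ deriv s (b : ℂ) = (c : ℂ))
    (hode : ∀ w ∈ U,
      (s w ^ 2 - 2 * (t : ℂ) * s w + 1) * deriv s w = s w * (w ^ 2 - (b : ℂ) ^ 2)) :
    deriv s (b : ℂ) = ((Real.sqrt (b * Real.exp θ / Real.sinh θ) : ℝ) : ℂ) :=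
  saddle_mapping_first_coefficient_general θ b hθ t ht U hU hbU s hs hsb hs'pos hode
end
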